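/- Let T'_n be the tree obtained from three stars K_{1,k−1}, K_{1,a−1}, K_{1,b−1} with centers x, u, v respectively (with a, b ≥ 2 and (k) + a + b = n) by adding the edges xu and xv. If n ≥ k + 4, then κ^1(T'_n) = k. -/

import Mathlib

open SimpleGraph

/-- `F` is a g-good-neighbor cut of `G`: removing `F` disconnects `G`
and every vertex outside `F` has at least `g` neighbors outside `F`. -/
def IsGNCut {V : Type*} [Fintype V] (G : SimpleGraph V) (g : ℕ) (F : Finset V) : Prop :=
  ¬ (G.induce ((↑F : Set V)ᶜ)).Preconnected ∧
    ∀ v : V, v ∉ F → g ≤ (G.neighborSet v \ (↑F : Set V)).ncard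

/-- The g-good-neighbor connectivity `κ^g(G)`: minimum size of a g-good-neighbor cut. -/
noncomputable def gnConn {V : Type*} [Fintype V] (G : SimpleGraph V) (g : ℕ) : ℕ :=
  sInf {m | ∃ F : Finset V, IsGNCut G g F ∧ F.card = m}

/-- Classical vertex connectivity (as minimum size of a vertex cut). -/
noncomputable def vConn {V : Type*} [Fintype V] (G : SimpleGraph V) : ℕ :=
  sInf {m | ∃ F : Finset V, ¬ (G.induce ((↑F : Set V)ᶜ)).Preconnected ∧ F.card = m}

/-- T'_n: three stars on Fin k, Fin a, Fin b with centers the index-0 vertices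
x, u, v, plus edges xu and xv. -/
def Tprime (k a b : ℕ) : SimpleGraph (Fin k ⊕ Fin a ⊕ Fin b) :=
  SimpleGraph.fromRel (fun x y =>
    match x, y with
    | Sum.inl i, Sum.inl j => (i : ℕ) = 0 ∧ (j : ℕ) ≠ 0
    | Sum.inr (Sum.inl i), Sum.inr (Sum.inl j) => (i : ℕ) = 0 ∧ (j : ℕ) ≠ 0
    | Sum.inr (Sum.inr i), Sum.inr (Sum.inr j) => (i : ℕ) = 0 ∧ (j : ℕ) ≠ 0
    | Sum.inl i, Sum.inr (Sum.inl j) => (i : ℕ) = 0 ∧ (j : ℕ) = 0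
    | Sum.inl i, Sum.inr (Sum.inr j) => (i : ℕ) = 0 ∧ (j : ℕ) = 0
    | _, _ => False)

/-!
Deleting the star at `x` separates the stars at `u` and `v`, and since `a, b ≥ 2` every remaining
vertex keeps a neighbour in its own star: a 1-good-neighbor cut of size `k`. Conversely, let `F` be
any 1-good-neighbor cut. If `x ∉ F`, every vertex outside `F` reaches `x` within two steps outside
`F` (a leaf of `u` or `v` must keep its centre, which is adjacent to `x`), so `F` does not
disconnect. Hence `x ∈ F`, and then every leaf of `x`, whose only neighbour is `x`, lies in `F`
too: `F` contains the whole star at `x`.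
-/

section GoodNeighborCut

variable {V : Type*} [Fintype V] {G : SimpleGraph V} {g : ℕ} {F : Finset V}

theorem gnConn_eq_card_of_isGNCut (hF : IsGNCut G g F)
    (hmin : ∀ F', IsGNCut G g F' → F.card ≤ F'.card) : gnConn G g = F.card :=
  le_antisymm (Nat.sInf_le ⟨F, hF, rfl⟩)
    (le_csInf ⟨_, F, hF, rfl⟩ (by rintro _ ⟨F', hF', rfl⟩; exact hmin F' hF'))

theorem IsGNCut.exists_adj_notMem (hF : IsGNCut G g F) (hg : g ≠ 0) {v : V} (hv : v ∉ F) :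
    ∃ w, G.Adj v w ∧ w ∉ F := by
  obtain ⟨w, hvw, hw⟩ : (G.neighborSet v \ ↑F).Nonempty :=
    Set.nonempty_of_ncard_ne_zero (by have := hF.2 v hv; omega)
  exact ⟨w, hvw, hw⟩

theorem isGNCut_one_of_forall_exists_adj
    (hdisc : ¬ (G.induce ((↑F : Set V)ᶜ)).Preconnected)
    (hadj : ∀ v, v ∉ F → ∃ w, G.Adj v w ∧ w ∉ F) : IsGNCut G 1 F :=
  ⟨hdisc, fun v hv => by
    obtain ⟨w, hvw, hw⟩ := hadj v hv
    exact (Set.ncard_pos (s := G.neighborSet v \ ↑F)).mpr ⟨w, hvw, hw⟩⟩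

end GoodNeighborCut

namespace SimpleGraph

variable {V β : Type*} {G : SimpleGraph V} {S : Set V}

theorem not_induce_preconnected_of_separating (f : V → β)
    (hf : ∀ p ∈ S, ∀ q ∈ S, G.Adj p q → f p = f q) {p q : V} (hp : p ∈ S) (hq : q ∈ S)
    (hpq : f p ≠ f q) : ¬ (G.induce S).Preconnected := fun h => by
  obtain ⟨w⟩ := h ⟨p, hp⟩ ⟨q, hq⟩
  obtain ⟨d, -, hd, hd'⟩ := w.exists_boundary_dart {r | f r.1 = f p} rfl (Ne.symm hpq)
  exact hd' (hd ▸ (hf _ d.fst.2 _ d.snd.2 d.adj).symm)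

theorem induce_preconnected_of_adj_center {x : V} (hx : x ∈ S)
    (hS : ∀ v ∈ S, ∃ w, G.Adj v w ∧ w ∈ S)
    (hfar : ∀ v, v ≠ x → ¬ G.Adj v x → ∀ w, G.Adj v w → G.Adj w x) :
    (G.induce S).Preconnected := by
  have toCenter : ∀ v : S, (G.induce S).Reachable v ⟨x, hx⟩ := by
    rintro ⟨v, hv⟩
    by_cases hvx : v = x
    · subst hvx; rfl
    by_cases hadj : G.Adj v x
    · exact Adj.reachable (G := G.induce S) (u := ⟨v, hv⟩) hadj
    obtain ⟨w, hvw, hw⟩ := hS v hv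
    exact (Adj.reachable (G := G.induce S) (u := ⟨v, hv⟩) (v := ⟨w, hw⟩) hvw).trans
      (Adj.reachable (G := G.induce S) (u := ⟨w, hw⟩) (hfar v hvx hadj w hvw))
  exact fun v w => (toCenter v).trans (toCenter w).symm

end SimpleGraph

namespace Tprime

open Finset

variable {k a b : ℕ}

theorem isLeft_eq_of_adj_inr {p q : Fin a ⊕ Fin b}
    (h : (Tprime k a b).Adj (.inr p) (.inr q)) : p.isLeft = q.isLeft := by
  rcases p with i | i <;> rcases q with j | j <;> simp_all [Tprime]

theorem exists_adj_inr_inl (ha : 2 ≤ a) (i : Fin a) :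
    ∃ j, (Tprime k a b).Adj (.inr (.inl i)) (.inr (.inl j)) := by
  by_cases hi : (i : ℕ) = 0
  · exact ⟨⟨1, ha⟩, by simp [Tprime, hi, Fin.ext_iff]⟩
  · exact ⟨⟨0, by omega⟩, by simp [Tprime, hi, Fin.ext_iff]⟩

theorem exists_adj_inr_inr (hb : 2 ≤ b) (i : Fin b) :
    ∃ j, (Tprime k a b).Adj (.inr (.inr i)) (.inr (.inr j)) := by
  by_cases hi : (i : ℕ) = 0
  · exact ⟨⟨1, hb⟩, by simp [Tprime, hi, Fin.ext_iff]⟩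
  · exact ⟨⟨0, by omega⟩, by simp [Tprime, hi, Fin.ext_iff]⟩

theorem eq_of_adj_inl {i : Fin k} (hi : (i : ℕ) ≠ 0) {w : Fin k ⊕ Fin a ⊕ Fin b}
    (h : (Tprime k a b).Adj (.inl i) w) : w = .inl ⟨0, i.pos⟩ := by
  rcases w with j | j | j <;> simp_all [Tprime, Fin.ext_iff]

theorem adj_center_of_adj_of_not_adj (i : Fin k) (v : Fin k ⊕ Fin a ⊕ Fin b)
    (hv : v ≠ .inl ⟨0, i.pos⟩) (hvx : ¬ (Tprime k a b).Adj v (.inl ⟨0, i.pos⟩))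
    (w : Fin k ⊕ Fin a ⊕ Fin b) (hvw : (Tprime k a b).Adj v w) : (Tprime k a b).Adj w (.inl ⟨0, i.pos⟩) := by
  rcases v with j | j | j <;> rcases w with l | l | l <;> simp_all [Tprime, Fin.ext_iff]

def xStar (k a b : ℕ) : Finset (Fin k ⊕ Fin a ⊕ Fin b) :=
  univ.image .inl

theorem card_xStar : (xStar k a b).card = k := by
  rw [xStar, card_image_of_injective _ Sum.inl_injective, card_univ, Fintype.card_fin]

theorem isGNCut_xStar (ha : 2 ≤ a) (hb : 2 ≤ b) : IsGNCut (Tprime k a b) 1 (xStar k a b) := by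
  refine isGNCut_one_of_forall_exists_adj ?_ ?_
  · refine not_induce_preconnected_of_separating (Sum.elim (fun _ => false) Sum.isLeft) ?_
      (p := .inr (.inl ⟨0, by omega⟩)) (q := .inr (.inr ⟨0, by omega⟩))
      (by simp [xStar]) (by simp [xStar]) (by simp)
    rintro (p | p) hp (q | q) hq hpq
    · simp [xStar] at hp
    · simp [xStar] at hp
    · simp [xStar] at hq
    · exact isLeft_eq_of_adj_inr hpq
  · rintro (i | i | i) hi
    · simp [xStar] at hi
    · obtain ⟨j, hj⟩ := exists_adj_inr_inl (k := k) (b := b) ha i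
      exact ⟨_, hj, by simp [xStar]⟩
    · obtain ⟨j, hj⟩ := exists_adj_inr_inr (k := k) (a := a) hb i
      exact ⟨_, hj, by simp [xStar]⟩

theorem xStar_subset_of_isGNCut {F : Finset (Fin k ⊕ Fin a ⊕ Fin b)}
    (hF : IsGNCut (Tprime k a b) 1 F) : xStar k a b ⊆ F := by
  rintro _ hv
  obtain ⟨i, -, rfl⟩ := mem_image.mp hv
  have hx : .inl ⟨0, i.pos⟩ ∈ F := by
    by_contra hx
    exact hF.1 <| induce_preconnected_of_adj_center hx
      (fun _ => hF.exists_adj_notMem one_ne_zero) (adj_center_of_adj_of_not_adj i)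
  by_contra hi
  by_cases hi0 : (i : ℕ) = 0
  · exact hi (by rwa [show i = ⟨0, i.pos⟩ from Fin.ext hi0])
  obtain ⟨w, hiw, hw⟩ := hF.exists_adj_notMem one_ne_zero hi
  exact hw (eq_of_adj_inl hi0 hiw ▸ hx)

end Tprime

theorem stmt14_general (k a b : ℕ) (ha : 2 ≤ a) (hb : 2 ≤ b) :
    gnConn (Tprime k a b) 1 = k := by
  refine (gnConn_eq_card_of_isGNCut (Tprime.isGNCut_xStar ha hb) ?_).trans Tprime.card_xStar
  exact fun F hF => Finset.card_le_card (Tprime.xStar_subset_of_isGNCut hF)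

/-- If a, b ≥ 2, k + a + b = n and n ≥ k + 4, then κ^1(T'_n) = k. -/
theorem stmt14 (n k a b : ℕ) (hk : 1 ≤ k) (ha : 2 ≤ a) (hb : 2 ≤ b)
    (hsum : k + a + b = n) (hn : k + 4 ≤ n) :
    gnConn (Tprime k a b) 1 = k :=
  stmt14_general k a b ha hb
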